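/- arXiv:2409.19172 — 4 statements merged into one kernel-verified Lean document; each statement's English description precedes it below -/
import Mathlib

section
/- Let A = ⟨Q, Σ₀ ∪ {a}⟩ be a standardized almost group automaton with e = excl(a), where G = ⟨Σ₀⟩ is transitive. If B ⊆ Q is a block of imprimitivity of G containing e with B·a ⊆ B, then the complement Q \ B is not reachable in A; consequently A is not completely reachable. -/
/-- The transformation monoid generated by the permutation letters S0 and the
defect-1 letter a. -/
def Mgen {Q : Type*} (S0 : Set (Equiv.Perm Q)) (a : Function.End Q) :
    Submonoid (Function.End Q) :=
  Submonoid.closure ((fun σ : Equiv.Perm Q => (⇑σ : Function.End Q)) '' S0 ∪ {a})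

/-- In a standardized almost group automaton, if a non-trivial block of
imprimitivity containing e is a-invariant, then its complement is not
reachable, hence the automaton is not completely reachable. -/
theorem stmt10 {Q : Type*} [Fintype Q] (S0 : Set (Equiv.Perm Q))
    (a : Function.End Q) (e : Q)
    (ha : ((Set.range (a : Q → Q))ᶜ : Set Q) = {e})
    (hstd : ∃ p : Q, p ≠ e ∧ a p = a e)
    (htrans : ∀ p q : Q, ∃ σ ∈ Subgroup.closure S0, σ p = q)
    (B : Set Q) (hBne : B.Nonempty)
    (hblock : ∀ σ ∈ Subgroup.closure S0, σ '' B = B ∨ (σ '' B) ∩ B = ∅)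
    (hnontriv : 1 < B.ncard ∧ B.ncard < (Set.univ : Set Q).ncard)
    (heB : e ∈ B) (hinv : (a : Q → Q) '' B ⊆ B) :
    (¬ ∃ w ∈ Mgen S0 a, Set.range (w : Q → Q) = Set.univ \ B) ∧
    ¬ (∀ P : Set Q, P.Nonempty → ∃ w ∈ Mgen S0 a, Set.range (w : Q → Q) = P) := by
  classical
  -- a maps the complement of B onto itself
  have hcompl : (a : Q → Q) '' (Set.univ \ B) = Set.univ \ B := by
    have hsub : Set.univ \ B ⊆ (a : Q → Q) '' (Set.univ \ B) := by
      intro q hq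
      have hqe : q ≠ e := fun h => hq.2 (h ▸ heB)
      have hqr : q ∈ Set.range (a : Q → Q) := by
        by_contra hc
        have : q ∈ ((Set.range (a : Q → Q))ᶜ : Set Q) := hc
        rw [ha] at this
        exact hqe this
      obtain ⟨r, hr⟩ := hqr
      refine ⟨r, ⟨trivial, fun hrB => ?_⟩, hr⟩
      exact hq.2 (hr ▸ hinv ⟨r, hrB, rfl⟩)
    exact (Set.eq_of_subset_of_ncard_le hsub
      (Set.ncard_image_le (Set.toFinite _)) (Set.toFinite _)).symm
  have hinj : Set.InjOn (a : Q → Q) (Set.univ \ B) := by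
    have hmt : Set.MapsTo (a : Q → Q) (Set.univ \ B) (Set.univ \ B) := by
      intro q hq; exact hcompl ▸ Set.mem_image_of_mem _ hq
    have hso : Set.SurjOn (a : Q → Q) (Set.univ \ B) (Set.univ \ B) :=
      hcompl.symm.subset
    exact ((Set.Finite.surjOn_iff_bijOn_of_mapsTo (Set.toFinite _) hmt).mp hso).injOn
  -- key invariant
  have key : ∀ w ∈ Mgen S0 a, ∀ τ ∈ Subgroup.closure S0,
      Set.range (w : Q → Q) ≠ Set.univ \ (⇑τ '' B) := by
    intro w hw
    induction hw using Submonoid.closure_induction_left with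
    | one =>
      intro τ _ hcon
      obtain ⟨b, hb⟩ := hBne
      have : τ b ∈ Set.range ((1 : Function.End Q) : Q → Q) := ⟨τ b, rfl⟩
      rw [hcon] at this
      exact this.2 ⟨b, hb, rfl⟩
    | mul_left x hx y hy ih =>
      intro τ hτ hcon
      have hrange : (x : Q → Q) '' Set.range (y : Q → Q)
          = Set.univ \ (⇑τ '' B) := by
        rw [← hcon]; exact (Set.range_comp _ _).symm
      rcases hx with ⟨σ, hσ, rfl⟩ | hxa
      · -- x is a permutation σ ∈ S0
        have hσG : σ ∈ Subgroup.closure S0 := Subgroup.subset_closure hσ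
        have hG : σ⁻¹ * τ ∈ Subgroup.closure S0 := mul_mem (inv_mem hσG) hτ
        refine ih (σ⁻¹ * τ) hG ?_
        have := congrArg (fun S => ⇑σ⁻¹ '' S) hrange
        simp only at this
        rw [← Set.image_comp] at this
        have h1 : (⇑σ⁻¹ ∘ (⇑σ : Q → Q)) = id := by
          funext q; simp
        rw [h1, Set.image_id] at this
        rw [this, Set.image_diff (Equiv.injective σ⁻¹), Set.image_univ,
          Equiv.range_eq_univ, ← Set.image_comp]
        congr 1
      · -- x is the letter a
        have hxa' : x = a := hxa
        rw [hxa'] at hrange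
        by_cases heτ : e ∈ ⇑τ '' B
        · -- then τ '' B = B
          have hτB : ⇑τ '' B = B := by
            rcases hblock τ hτ with h | h
            · exact h
            · exact absurd (Set.mem_inter heτ heB) (h ▸ id)
          rw [hτB] at hrange
          -- range y = univ \ B
          have hsubS : Set.range (y : Q → Q) ⊆ Set.univ \ B := by
            intro q hq
            refine ⟨trivial, fun hqB => ?_⟩
            have h1 : a q ∈ Set.univ \ B := hrange ▸ Set.mem_image_of_mem _ hq
            exact h1.2 (hinv ⟨q, hqB, rfl⟩)
          have hS : Set.range (y : Q → Q) = Set.univ \ B := by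
            refine Set.Subset.antisymm hsubS ?_
            intro b hb
            have : a b ∈ (a : Q → Q) '' Set.range (y : Q → Q) := by
              rw [hrange, ← hcompl]; exact Set.mem_image_of_mem _ hb
            obtain ⟨s, hs, hsb⟩ := this
            have : s = b := hinj (hsubS hs) hb hsb
            exact this ▸ hs
          refine ih 1 (one_mem _) ?_
          rw [hS]; congr 1; simp
        · -- e ∉ τ '' B, but e ∉ range a
          have h1 : e ∈ Set.univ \ (⇑τ '' B) := ⟨trivial, heτ⟩
          rw [← hrange] at h1
          obtain ⟨s, _, hs⟩ := h1
          have : e ∈ ((Set.range (a : Q → Q))ᶜ : Set Q) := by rw [ha]; rfl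
          exact this ⟨s, hs⟩
  have part1 : ¬ ∃ w ∈ Mgen S0 a, Set.range (w : Q → Q) = Set.univ \ B := by
    rintro ⟨w, hw, hrg⟩
    refine key w hw 1 (one_mem _) ?_
    rw [hrg]; congr 1; simp
  refine ⟨part1, fun hall => ?_⟩
  have hne : (Set.univ \ B).Nonempty := by
    by_contra hc
    rw [Set.not_nonempty_iff_eq_empty, Set.diff_eq_empty] at hc
    have : (Set.univ : Set Q).ncard ≤ B.ncard :=
      Set.ncard_le_ncard hc (Set.toFinite _)
    omega
  exact part1 (hall _ hne)
end

section
/- Let A = ⟨Q, Σ₀ ∪ {a}⟩ be an almost group automaton with G = ⟨Σ₀⟩ transitive and e = excl(a). If q → p is an edge of the graph Γ₁(A) (i.e., there is a word w of defect 1 with excl(w) = {q} and dupl(w) = {p}), then there exists σ ∈ G with e·σ = q and a word v of defect 1 with excl(v) = {e} and dupl(v) = {p·σ⁻¹}. -/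
def duplSet {α β : Type*} (f : α → β) : Set β :=
  {x | ∃ y z : α, y ≠ z ∧ f y = x ∧ f z = x}

section Conjugation

variable {α β γ δ : Type*}

theorem duplSet_comp_equiv (f : β → γ) (h : α ≃ β) : duplSet (f ∘ h) = duplSet f := by
  ext x
  constructor
  · rintro ⟨y, z, hyz, hy, hz⟩
    exact ⟨h y, h z, h.injective.ne hyz, hy, hz⟩
  · rintro ⟨y, z, hyz, rfl, hz⟩
    exact ⟨h.symm y, h.symm z, h.symm.injective.ne hyz, by simp, by simp [hz]⟩

theorem duplSet_comp_of_injective {g : γ → δ} (hg : g.Injective) (f : β → γ) :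
    duplSet (g ∘ f) = g '' duplSet f := by
  ext x
  constructor
  · rintro ⟨y, z, hyz, rfl, hz⟩
    exact ⟨f y, ⟨y, z, hyz, rfl, hg hz⟩, rfl⟩
  · rintro ⟨-, ⟨y, z, hyz, rfl, hz⟩, rfl⟩
    exact ⟨y, z, hyz, rfl, congrArg g hz⟩

theorem duplSet_equiv_comp_comp (g : γ ≃ δ) (f : β → γ) (h : α ≃ β) :
    duplSet (g ∘ f ∘ h) = g '' duplSet f := by
  rw [duplSet_comp_of_injective g.injective, duplSet_comp_equiv]

theorem compl_range_equiv_comp_comp (g : γ ≃ δ) (f : β → γ) (h : α ≃ β) :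
    (Set.range (g ∘ f ∘ h))ᶜ = g '' (Set.range f)ᶜ := by
  rw [Set.range_comp, h.surjective.range_comp, g.image_compl]

end Conjugation

/-- Inverses in a finite group are positive powers, so `G` is reached by words over `S0`. -/
theorem perm_mem_Mgen {Q : Type*} [Finite Q] {S0 : Set (Equiv.Perm Q)} (a : Function.End Q)
    {σ : Equiv.Perm Q} (hσ : σ ∈ Subgroup.closure S0) : (⇑σ : Function.End Q) ∈ Mgen S0 a := by
  rw [← Subgroup.mem_toSubmonoid, Subgroup.closure_toSubmonoid_of_finite] at hσ
  have hmap := Submonoid.mem_map_of_mem (MulAction.toEndHom (M := Equiv.Perm Q) (α := Q)) hσ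
  rw [MonoidHom.map_mclosure] at hmap
  exact Submonoid.closure_mono (M := Function.End Q) Set.subset_union_left hmap

theorem stmt11_general {Q : Type*} [Fintype Q] (S0 : Set (Equiv.Perm Q))
    (a : Function.End Q) (e : Q)
    (htrans : ∀ p q : Q, ∃ σ ∈ Subgroup.closure S0, σ p = q)
    (q p : Q)
    (hedge : ∃ w ∈ Mgen S0 a, ((Set.range (w : Q → Q))ᶜ : Set Q) = {q} ∧
      {x : Q | ∃ y z : Q, y ≠ z ∧ w y = x ∧ w z = x} = {p}) :
    ∃ σ ∈ Subgroup.closure S0, σ e = q ∧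
      ∃ v ∈ Mgen S0 a, ((Set.range (v : Q → Q))ᶜ : Set Q) = {e} ∧
        {x : Q | ∃ y z : Q, y ≠ z ∧ v y = x ∧ v z = x} = {σ⁻¹ p} := by
  obtain ⟨w, hw, hexcl, hdupl⟩ := hedge
  obtain ⟨σ, hσ, rfl⟩ := htrans e q
  refine ⟨σ, hσ, rfl, ⇑σ⁻¹ ∘ w ∘ ⇑σ, ?_, ?_, ?_⟩
  · have hconj := mul_mem (mul_mem (perm_mem_Mgen a (inv_mem hσ)) hw) (perm_mem_Mgen a hσ)
    exact hconj
  · exact (compl_range_equiv_comp_comp σ⁻¹ w σ).trans (by simp [hexcl])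
  · exact (duplSet_equiv_comp_comp σ⁻¹ w σ).trans
      (by rw [show duplSet w = {p} from hdupl, Set.image_singleton])

/-- Every edge q → p of Γ₁(A) is the image by a permutation of G of an edge
with source e: there is σ ∈ G with e·σ = q and a defect-1 word v with
excl(v) = {e} and dupl(v) = {p·σ⁻¹}. -/
theorem stmt11 {Q : Type*} [Fintype Q] (S0 : Set (Equiv.Perm Q))
    (a : Function.End Q) (e : Q)
    (ha : ((Set.range (a : Q → Q))ᶜ : Set Q) = {e})
    (htrans : ∀ p q : Q, ∃ σ ∈ Subgroup.closure S0, σ p = q)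
    (q p : Q)
    (hedge : ∃ w ∈ Mgen S0 a, ((Set.range (w : Q → Q))ᶜ : Set Q) = {q} ∧
      {x : Q | ∃ y z : Q, y ≠ z ∧ w y = x ∧ w z = x} = {p}) :
    ∃ σ ∈ Subgroup.closure S0, σ e = q ∧
      ∃ v ∈ Mgen S0 a, ((Set.range (v : Q → Q))ᶜ : Set Q) = {e} ∧
        {x : Q | ∃ y z : Q, y ≠ z ∧ v y = x ∧ v z = x} = {σ⁻¹ p} :=
  stmt11_general S0 a e htrans q p hedge
end

section
/- Let A = ⟨Q, Σ₀ ∪ {a}⟩ be an almost group automaton with G = ⟨Σ₀⟩ transitive and e = excl(a). Then the vertex set C_e of the strongly connected component of e in Γ₁(A) is a block of the group G acting on Q: for every ρ ∈ G, either C_e·ρ = C_e or C_e·ρ ∩ C_e = ∅. -/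
/-- Edges of the Rystsov graph Γ₁(A). -/
def edge {Q : Type*} (S0 : Set (Equiv.Perm Q)) (a : Function.End Q)
    (q p : Q) : Prop :=
  ∃ w ∈ Mgen S0 a, ((Set.range (w : Q → Q))ᶜ : Set Q) = {q} ∧
    {x : Q | ∃ y z : Q, y ≠ z ∧ w y = x ∧ w z = x} = {p}

/-- The strongly connected component of q in Γ₁(A). -/
def scc {Q : Type*} (S0 : Set (Equiv.Perm Q)) (a : Function.End Q)
    (q : Q) : Set Q :=
  {p : Q | Relation.ReflTransGen (edge S0 a) q p ∧
    Relation.ReflTransGen (edge S0 a) p q}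

/-- The points of `Q` hit at least twice by `w` (the paper's `dupl w` when `w` has defect 1). -/
def dupl {Q : Type*} (w : Q → Q) : Set Q :=
  {x : Q | ∃ y z : Q, y ≠ z ∧ w y = x ∧ w z = x}

lemma compl_range_perm_comp {Q : Type*} (ρ : Equiv.Perm Q) (w : Q → Q) :
    (Set.range (ρ ∘ w))ᶜ = ρ '' (Set.range w)ᶜ := by
  rw [Set.range_comp, Equiv.image_compl]

lemma dupl_perm_comp {Q : Type*} (ρ : Equiv.Perm Q) (w : Q → Q) :
    dupl (ρ ∘ w) = ρ '' dupl w := by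
  ext x
  simp [dupl, Equiv.image_eq_preimage_symm, Equiv.eq_symm_apply]

lemma toEndHom_mem_Mgen {Q : Type*} [Finite Q] {S0 : Set (Equiv.Perm Q)} (a : Function.End Q)
    {ρ : Equiv.Perm Q} (hρ : ρ ∈ Subgroup.closure S0) :
    MulAction.toEndHom (α := Q) ρ ∈ Mgen S0 a := by
  rw [← Subgroup.mem_toSubmonoid, Subgroup.closure_toSubmonoid_of_finite] at hρ
  have h := Submonoid.mem_map_of_mem (MulAction.toEndHom (α := Q)) hρ
  rw [MonoidHom.map_mclosure] at h
  exact Submonoid.closure_mono Set.subset_union_left h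

lemma edge_perm_apply {Q : Type*} [Finite Q] {S0 : Set (Equiv.Perm Q)} {a : Function.End Q}
    {ρ : Equiv.Perm Q} (hρ : ρ ∈ Subgroup.closure S0) {q p : Q} (h : edge S0 a q p) :
    edge S0 a (ρ q) (ρ p) := by
  obtain ⟨w, hw, hexcl, hdupl⟩ := h
  refine ⟨MulAction.toEndHom ρ * w, mul_mem (toEndHom_mem_Mgen a hρ) hw, ?_, ?_⟩
  · exact (compl_range_perm_comp ρ w).trans (by rw [hexcl, Set.image_singleton])
  · exact (dupl_perm_comp ρ w).trans (by rw [show dupl w = {p} from hdupl, Set.image_singleton])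

lemma reflTransGen_edge_perm_apply_iff {Q : Type*} [Finite Q] {S0 : Set (Equiv.Perm Q)}
    {a : Function.End Q} {ρ : Equiv.Perm Q} (hρ : ρ ∈ Subgroup.closure S0) {q p : Q} :
    Relation.ReflTransGen (edge S0 a) (ρ q) (ρ p) ↔ Relation.ReflTransGen (edge S0 a) q p := by
  refine ⟨fun h => ?_, Relation.ReflTransGen.lift ρ (fun _ _ => edge_perm_apply hρ) _ _⟩
  simpa [Function.onFun] using
    Relation.ReflTransGen.lift ⇑ρ⁻¹ (fun _ _ => edge_perm_apply (inv_mem hρ)) _ _ h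

lemma perm_image_scc {Q : Type*} [Finite Q] {S0 : Set (Equiv.Perm Q)} (a : Function.End Q)
    {ρ : Equiv.Perm Q} (hρ : ρ ∈ Subgroup.closure S0) (q : Q) :
    ρ '' scc S0 a q = scc S0 a (ρ q) := by
  ext x
  obtain ⟨y, rfl⟩ := ρ.surjective x
  simp only [ρ.injective.mem_set_image, scc, Set.mem_ofPred_eq,
    reflTransGen_edge_perm_apply_iff hρ]

lemma scc_eq_of_mem {Q : Type*} {S0 : Set (Equiv.Perm Q)} {a : Function.End Q} {q x : Q}
    (hx : x ∈ scc S0 a q) : scc S0 a q = scc S0 a x := by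
  obtain ⟨hqx, hxq⟩ := hx
  ext y
  exact ⟨fun ⟨hqy, hyq⟩ => ⟨hxq.trans hqy, hyq.trans hqx⟩,
    fun ⟨hxy, hyx⟩ => ⟨hqx.trans hxy, hyx.trans hxq⟩⟩

theorem stmt13_general {Q : Type*} [Fintype Q] (S0 : Set (Equiv.Perm Q))
    (a : Function.End Q) (e : Q) :
    ∀ ρ ∈ Subgroup.closure S0,
      ρ '' scc S0 a e = scc S0 a e ∨ (ρ '' scc S0 a e) ∩ scc S0 a e = ∅ := by
  intro ρ hρ
  rw [perm_image_scc a hρ, or_iff_not_imp_right]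
  intro hmeet
  obtain ⟨x, hx, hx'⟩ := Set.nonempty_iff_ne_empty.mpr hmeet
  rw [scc_eq_of_mem hx, scc_eq_of_mem hx']

/-- The strongly connected component of e in Γ₁(A) is a block of the group G
acting on Q. -/
theorem stmt13 {Q : Type*} [Fintype Q] (S0 : Set (Equiv.Perm Q))
    (a : Function.End Q) (e : Q)
    (ha : ((Set.range (a : Q → Q))ᶜ : Set Q) = {e})
    (htrans : ∀ p q : Q, ∃ σ ∈ Subgroup.closure S0, σ p = q) :
    ∀ ρ ∈ Subgroup.closure S0,
      ρ '' scc S0 a e = scc S0 a e ∨ (ρ '' scc S0 a e) ∩ scc S0 a e = ∅ :=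
  stmt13_general S0 a e
end

section
/- Let G be a permutation group on a finite set Q with |Q| ≥ 3. If G is primitive, then for every transformation f of Q of defect 1 the automaton ⟨Q, G ∪ {f}⟩ is completely reachable; i.e., every nonempty subset of Q is the image of Q under some element of the transformation monoid generated by G ∪ {f}. -/
/-!
A set `A` is extensible when some word has a strictly larger preimage of `A` mapping onto `A`;
if every nonempty proper subset is extensible, every nonempty subset is reachable by induction
on `|Q| - |A|`. A defect-one map `f` misses exactly one state `e` and merges two states into one
state `d`, so `f` extends every set containing `d` and avoiding `e`. Primitivity is what
moves an arbitrary nonempty proper `A` into this position: the nonempty proper sets `S` with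
`σ d ∈ S → σ e ∈ S` for all `σ ∈ G` are closed under translation and intersection, so an
inclusion-minimal one would be a nontrivial block.
-/

open Set

theorem exists_range_eq_of_forall_exists_image_eq {Q : Type*} [Finite Q]
    (M : Submonoid (Function.End Q))
    (hext : ∀ A : Set Q, A.Nonempty → A ≠ univ →
      ∃ w ∈ M, ∃ B : Set Q, A.ncard < B.ncard ∧ (w : Q → Q) '' B = A) :
    ∀ A : Set Q, A.Nonempty → ∃ w ∈ M, range (w : Q → Q) = A := by
  intro A hA
  induction hk : Nat.card Q - A.ncard using Nat.strong_induction_on generalizing A with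
  | _ k ih =>
  by_cases hAuniv : A = univ
  · exact ⟨1, M.one_mem, hAuniv ▸ range_id⟩
  obtain ⟨w, hwM, B, hAB, hwB⟩ := hext A hA hAuniv
  have hB : B.Nonempty := nonempty_of_ncard_ne_zero (by omega)
  have hBcard : B.ncard ≤ Nat.card Q := ncard_le_card B
  obtain ⟨v, hvM, hvB⟩ := ih _ (by omega) B hB rfl
  exact ⟨w * v, M.mul_mem hwM hvM, by rw [← hwB, ← hvB]; exact range_comp w v⟩

theorem ncard_lt_ncard_preimage {α β : Type*} [Finite α] {f : α → β} {S : Set β}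
    (hS : S ⊆ range f) {p₁ p₂ : α} (hne : p₁ ≠ p₂) (hcol : f p₁ = f p₂) (hp : f p₁ ∈ S) :
    S.ncard < (f ⁻¹' S).ncard := by
  have hnotInjOn : ¬ InjOn f (f ⁻¹' S) := fun h => hne (h hp (by rwa [mem_preimage, ← hcol]) hcol)
  calc S.ncard = (f '' (f ⁻¹' S)).ncard := by rw [image_preimage_eq_of_subset hS]
    _ < (f ⁻¹' S).ncard :=
      (ncard_image_le (toFinite _)).lt_of_ne (mt injOn_of_ncard_image_eq hnotInjOn)

theorem exists_mem_perm_apply_mem_and_not_mem {Q : Type*} [Finite Q] {G : Subgroup (Equiv.Perm Q)}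
    (htrans : ∀ p q : Q, ∃ σ ∈ G, σ p = q)
    (hprim : ∀ B : Set Q, B.Nonempty →
      (∀ σ ∈ G, σ '' B = B ∨ (σ '' B) ∩ B = ∅) → B.Subsingleton ∨ B = univ)
    {d e : Q} (hde : d ≠ e) {A : Set Q} (hA : A.Nonempty) (hAuniv : A ≠ univ) :
    ∃ σ ∈ G, σ d ∈ A ∧ σ e ∉ A := by
  by_contra! hAclosed
  let P : Set Q → Prop := fun S =>
    (∀ σ ∈ G, σ d ∈ S → σ e ∈ S) ∧ S.Nonempty ∧ S ≠ univ
  obtain ⟨B, hBmin⟩ := exists_minimal_of_wellFoundedLT P ⟨A, hAclosed, hA, hAuniv⟩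
  obtain ⟨hBclosed, hBne, hBuniv⟩ := hBmin.prop
  have hblock : ∀ σ ∈ G, σ '' B = B ∨ (σ '' B) ∩ B = ∅ := by
    intro σ hσ
    refine (eq_empty_or_nonempty _).symm.imp_left fun hmeet => ?_
    have himage_closed : ∀ τ ∈ G, τ d ∈ σ '' B → τ e ∈ σ '' B := by
      intro τ hτ hτd
      rw [Equiv.image_eq_preimage_symm] at hτd ⊢
      exact hBclosed (σ⁻¹ * τ) (G.mul_mem (G.inv_mem hσ) hτ) hτd
    have hmeet_eq : σ '' B ∩ B = B := hBmin.eq_of_subset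
      ⟨fun τ hτ h => ⟨himage_closed τ hτ h.1, hBclosed τ hτ h.2⟩, hmeet,
        fun h => hBuniv (eq_univ_of_univ_subset (h ▸ inter_subset_right))⟩
      inter_subset_right
    exact (eq_of_subset_of_ncard_le (hmeet_eq.symm.subset.trans inter_subset_left)
      (ncard_image_of_injective B σ.injective).le).symm
  rcases hprim B hBne hblock with hsub | huniv
  · obtain ⟨x, hx⟩ := hBne
    obtain ⟨σ, hσ, rfl⟩ := htrans d x
    exact hde (σ.injective (hsub (hBclosed σ hσ hx) hx)).symm
  · exact hBuniv huniv

theorem stmt15_general {Q : Type*} [Fintype Q]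
    (G : Subgroup (Equiv.Perm Q))
    (htrans : ∀ p q : Q, ∃ σ ∈ G, σ p = q)
    (hprim : ∀ B : Set Q, B.Nonempty →
      (∀ σ ∈ G, σ '' B = B ∨ (σ '' B) ∩ B = ∅) → B.Subsingleton ∨ B = Set.univ)
    (f : Function.End Q)
    (hf : ((Set.range (f : Q → Q))ᶜ : Set Q).ncard = 1) :
    ∀ A : Set Q, A.Nonempty →
      ∃ w ∈ Submonoid.closure
        (((fun σ : Equiv.Perm Q => (⇑σ : Function.End Q)) '' (G : Set (Equiv.Perm Q)) ∪ {f} : Set (Function.End Q))),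
        Set.range (w : Q → Q) = A := by
  obtain ⟨e, he⟩ := ncard_eq_one.mp hf
  have hnotInj : ¬ Function.Injective (f : Q → Q) := fun hinj => by
    simp [(Finite.injective_iff_surjective.mp hinj).range_eq] at he
  obtain ⟨p₁, p₂, hcol, hne⟩ := Function.not_injective_iff.mp hnotInj
  have hcompl : ∀ S : Set Q, e ∉ S → S ⊆ range (f : Q → Q) := fun S heS x hx => by
    by_contra hxf
    rw [← mem_compl_iff, he, mem_singleton_iff] at hxf
    exact heS (hxf ▸ hx)
  have he_range : e ∉ range (f : Q → Q) := by
    rw [← mem_compl_iff, he]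
    exact mem_singleton e
  have hde : f p₁ ≠ e := fun h => he_range (h ▸ mem_range_self p₁)
  refine exists_range_eq_of_forall_exists_image_eq _ fun A hA hAuniv => ?_
  obtain ⟨σ, hσ, hσd, hσe⟩ := exists_mem_perm_apply_mem_and_not_mem htrans hprim hde hA hAuniv
  have hσA : σ ⁻¹' A ⊆ range (f : Q → Q) := hcompl _ hσe
  let g : Function.End Q := ⇑σ
  refine ⟨g * f, Submonoid.mul_mem _ (Submonoid.subset_closure (Or.inl ⟨σ, hσ, rfl⟩))
    (Submonoid.subset_closure (Or.inr (mem_singleton f))), f ⁻¹' (σ ⁻¹' A), ?_, ?_⟩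
  · calc A.ncard = (σ ⁻¹' A).ncard :=
          (ncard_preimage_of_injective_subset_range σ.injective (by simp)).symm
      _ < (f ⁻¹' (σ ⁻¹' A)).ncard := ncard_lt_ncard_preimage hσA hne hcol hσd
  · exact (image_comp σ f _).trans
      (by rw [image_preimage_eq_of_subset hσA, Equiv.image_preimage])

/-- (Theorem 3.1 of Hoffmann, forward direction.) If G is a primitive
permutation group on Q with |Q| ≥ 3, then for every transformation f of
defect 1 the automaton ⟨Q, G ∪ {f}⟩ is completely reachable. -/
theorem stmt15 {Q : Type*} [Fintype Q] (hQ : 3 ≤ Fintype.card Q)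
    (G : Subgroup (Equiv.Perm Q))
    (htrans : ∀ p q : Q, ∃ σ ∈ G, σ p = q)
    (hprim : ∀ B : Set Q, B.Nonempty →
      (∀ σ ∈ G, σ '' B = B ∨ (σ '' B) ∩ B = ∅) → B.Subsingleton ∨ B = Set.univ)
    (f : Function.End Q)
    (hf : ((Set.range (f : Q → Q))ᶜ : Set Q).ncard = 1) :
    ∀ A : Set Q, A.Nonempty →
      ∃ w ∈ Submonoid.closure
        (((fun σ : Equiv.Perm Q => (⇑σ : Function.End Q)) '' (G : Set (Equiv.Perm Q)) ∪ {f} : Set (Function.End Q))),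
        Set.range (w : Q → Q) = A :=
  stmt15_general G htrans hprim f hf
end
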